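/- arXiv:1806.06391 — 6 statements merged into one kernel-verified Lean document; each statement's English description precedes it below -/
import Mathlib

section
/- Let T > 0 and define u : (−∞,T) × ℝ → ℝ by u(t,x) = −x/(4(T−t)). Then u is a classical solution of the Degasperis–Procesi equation on (0,T) × ℝ: for all 0 < t < T and all x ∈ ℝ, ∂ₜu − ∂ₜ∂ₓ²u + 4u·∂ₓu = 3·∂ₓu·∂ₓ²u + u·∂ₓ³u. -/
/-!
For `u t x = a t * x` every spatial derivative beyond the first vanishes and `∂ₓu = a`, so the
Degasperis–Procesi equation collapses to the Riccati equation `a' = -4 a²`. Its solution blowing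
up at `t = T` is `a t = -1 / (4 (T - t))`.
-/

/-- Partial derivative in the first (time) variable of a curried function. -/
noncomputable def partialT (u : ℝ → ℝ → ℝ) (t x : ℝ) : ℝ := deriv (fun s => u s x) t

/-- Partial derivative in the second (space) variable of a curried function. -/
noncomputable def partialX (u : ℝ → ℝ → ℝ) (t x : ℝ) : ℝ := deriv (fun y => u t y) x

theorem partialX_mul_right (a : ℝ → ℝ) : partialX (fun t x => a t * x) = fun t _ => a t := by
  ext t x
  simp [partialX]

theorem partialX_const_right (c : ℝ → ℝ) : partialX (fun t _ => c t) = 0 := by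
  ext t x
  simp [partialX]

theorem partialT_zero : partialT 0 = 0 := by
  ext t x
  simp [partialT]

theorem partialT_mul_right {a : ℝ → ℝ} {a' t : ℝ} (ha : HasDerivAt a a' t) (x : ℝ) :
    partialT (fun t x => a t * x) t x = a' * x :=
  (ha.mul_const x).deriv

theorem degasperisProcesi_mul_right_of_riccati {a : ℝ → ℝ} {t : ℝ}
    (ha : HasDerivAt a (-4 * a t ^ 2) t) (x : ℝ) :
    let u : ℝ → ℝ → ℝ := fun t x => a t * x
    partialT u t x - partialT (partialX (partialX u)) t x + 4 * u t x * partialX u t x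
      = 3 * partialX u t x * partialX (partialX u) t x
        + u t x * partialX (partialX (partialX u)) t x := by
  simp only [partialT_mul_right ha, partialX_mul_right, partialX_const_right, partialT_zero]
  simp only [Pi.zero_apply, partialX, deriv_const]
  ring

theorem hasDerivAt_neg_inv_four_mul_sub {T t : ℝ} (ht : t ≠ T) :
    HasDerivAt (fun s => -(4 * (T - s))⁻¹) (-4 * (-(4 * (T - t))⁻¹) ^ 2) t := by
  have hne : 4 * (T - t) ≠ 0 := by
    have : T - t ≠ 0 := sub_ne_zero.mpr ht.symm
    positivity
  refine ((((hasDerivAt_id' t).const_sub T).const_mul 4).fun_inv hne).fun_neg.congr_deriv ?_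
  rw [neg_sq, inv_pow]
  ring

theorem selfSimilar_solves_degasperisProcesi_general
    (T : ℝ) (u : ℝ → ℝ → ℝ)
    (hu : ∀ t x : ℝ, u t x = -x / (4 * (T - t))) :
    ∀ t x : ℝ, 0 < t → t < T →
      partialT u t x - partialT (partialX (partialX u)) t x
        + 4 * u t x * partialX u t x
      = 3 * partialX u t x * partialX (partialX u) t x
        + u t x * partialX (partialX (partialX u)) t x := by
  intro t x _ htT
  have hu' : u = fun t x => -(4 * (T - t))⁻¹ * x := by
    ext t x
    rw [hu, neg_div, div_eq_inv_mul, neg_mul]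
  subst hu'
  exact degasperisProcesi_mul_right_of_riccati (hasDerivAt_neg_inv_four_mul_sub htT.ne) x

/-- `u(t,x) = -x/(4(T-t))` is a classical solution of the Degasperis–Procesi equation
`u_t - u_{txx} + 4 u u_x = 3 u_x u_{xx} + u u_{xxx}` on `(0,T) × ℝ`. -/
theorem selfSimilar_solves_degasperisProcesi
    (T : ℝ) (hT : 0 < T) (u : ℝ → ℝ → ℝ)
    (hu : ∀ t x : ℝ, u t x = -x / (4 * (T - t))) :
    ∀ t x : ℝ, 0 < t → t < T →
      partialT u t x - partialT (partialX (partialX u)) t x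
        + 4 * u t x * partialX u t x
      = 3 * partialX u t x * partialX (partialX u) t x
        + u t x * partialX (partialX (partialX u)) t x :=
  selfSimilar_solves_degasperisProcesi_general T u hu
end

section
/- Let T > 0 and define u : (−∞,T) × ℝ → ℝ by u(t,x) = −(2/3)·(x/(T−t) − 1). Then u is a classical solution of the Fornberg–Whitham equation on (0,T) × ℝ: for all 0 < t < T and all x ∈ ℝ, ∂ₜu − ∂ₜ∂ₓ²u − ∂ₓu + (3/2)·u·∂ₓu − (3/2)·u·∂ₓ³u − (9/2)·∂ₓu·∂ₓ²u = 0. -/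
/-!
For each fixed `t` the profile is affine, `u(t,x) = a(t) x + 2/3` with `a(t) = -(2/3)/(T-t)`.
Hence `u_x = a(t)`, every higher `x`-derivative and `u_{txx}` vanish, and the equation reduces to
`a'(t) x - a + (3/2)(a x + 2/3) a = 0`, i.e. to the Riccati equation `a' = -(3/2) a²`.
-/

section Affine

variable (a b : ℝ → ℝ) (t x : ℝ)

theorem partialX_affine : partialX (fun t x => a t * x + b t) t x = a t := by
  simp [partialX]

theorem partialX_of_const_in_x : partialX (fun t _ => b t) t x = 0 :=
  deriv_const x (b t)

theorem partialX_partialX_affine :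
    partialX (partialX fun t x => a t * x + b t) = fun _ _ => 0 := by
  have hx : partialX (fun t x => a t * x + b t) = fun t _ => a t := by
    funext t x
    exact partialX_affine a b t x
  funext t x
  rw [hx]
  exact partialX_of_const_in_x a t x

end Affine

theorem partialT_affine {a b : ℝ → ℝ} {t : ℝ} (ha : DifferentiableAt ℝ a t)
    (hb : DifferentiableAt ℝ b t) (x : ℝ) :
    partialT (fun t x => a t * x + b t) t x = deriv a t * x + deriv b t := by
  simp only [partialT]
  exact ((ha.hasDerivAt.mul_const x).add hb.hasDerivAt).deriv

noncomputable def fornbergWhitham (u : ℝ → ℝ → ℝ) (t x : ℝ) : ℝ :=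
  partialT u t x - partialT (partialX (partialX u)) t x
    - partialX u t x + (3 / 2) * u t x * partialX u t x
    - (3 / 2) * u t x * partialX (partialX (partialX u)) t x
    - (9 / 2) * partialX u t x * partialX (partialX u) t x

theorem fornbergWhitham_affine {a b : ℝ → ℝ} {t : ℝ} (ha : DifferentiableAt ℝ a t)
    (hb : DifferentiableAt ℝ b t) (x : ℝ) :
    fornbergWhitham (fun t x => a t * x + b t) t x
      = deriv a t * x + deriv b t - a t + (3 / 2) * (a t * x + b t) * a t := by
  simp only [fornbergWhitham, partialX_partialX_affine, partialX_affine,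
    partialT_affine ha hb, partialX_of_const_in_x]
  simp [partialT]

theorem hasDerivAt_div_sub (c T t : ℝ) (ht : t ≠ T) :
    HasDerivAt (fun s => c / (T - s)) (c / (T - t) ^ 2) t := by
  have hne : T - t ≠ 0 := sub_ne_zero.mpr ht.symm
  refine ((hasDerivAt_const t c).fun_div ((hasDerivAt_id' t).const_sub T) hne).congr_deriv ?_
  ring

theorem selfSimilar_solves_fornbergWhitham_general
    (T : ℝ) (u : ℝ → ℝ → ℝ)
    (hu : ∀ t x : ℝ, u t x = -(2 / 3) * (x / (T - t) - 1)) :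
    ∀ t x : ℝ, 0 < t → t < T →
      partialT u t x - partialT (partialX (partialX u)) t x
        - partialX u t x + (3 / 2) * u t x * partialX u t x
        - (3 / 2) * u t x * partialX (partialX (partialX u)) t x
        - (9 / 2) * partialX u t x * partialX (partialX u) t x = 0 := by
  intro t x _ htT
  have hu_affine : u = fun s y => (-(2 / 3) / (T - s)) * y + 2 / 3 := by
    funext s y
    rw [hu]
    ring
  have ha := hasDerivAt_div_sub (-(2 / 3)) T t htT.ne
  change fornbergWhitham u t x = 0
  rw [hu_affine, fornbergWhitham_affine ha.differentiableAt (differentiableAt_const _),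
    ha.deriv, deriv_const]
  have hne : T - t ≠ 0 := sub_ne_zero.mpr htT.ne'
  field_simp
  ring

/-- `u(t,x) = -(2/3)(x/(T-t) - 1)` is a classical solution of the Fornberg–Whitham equation
`u_t - u_{txx} - u_x + (3/2) u u_x - (3/2) u u_{xxx} - (9/2) u_x u_{xx} = 0` on `(0,T) × ℝ`. -/
theorem selfSimilar_solves_fornbergWhitham
    (T : ℝ) (hT : 0 < T) (u : ℝ → ℝ → ℝ)
    (hu : ∀ t x : ℝ, u t x = -(2 / 3) * (x / (T - t) - 1)) :
    ∀ t x : ℝ, 0 < t → t < T →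
      partialT u t x - partialT (partialX (partialX u)) t x
        - partialX u t x + (3 / 2) * u t x * partialX u t x
        - (3 / 2) * u t x * partialX (partialX (partialX u)) t x
        - (9 / 2) * partialX u t x * partialX (partialX u) t x = 0 :=
  selfSimilar_solves_fornbergWhitham_general T u hu
end

section
/- Let T > 0 and let α, c₀, Γ, b, c₁, c₂ be real numbers with b ≠ −1. Let u : (0,T) × ℝ → ℝ be a smooth classical solution of the generalized b-equation on (0,T) × ℝ. Define the perturbation in similarity coordinates by v(τ,ρ) = u(T − e^{−τ}, e^{−τ}ρ) + (1/(b+1))(ρ + c₀) for τ > −log T, ρ ∈ ℝ. Then v satisfies ∂_τv − α²e^{2τ}∂_τ∂_ρ²v − α²e^{2τ}(2 − c₁/(b+1))∂_ρ²v + e^{2τ}(Γ + α²c₀c₂/(b+1) + α²((c₂−b−1)/(b+1))ρ)∂_ρ³v − v + (b+1)v·∂_ρv = α²e^{2τ}(c₁∂_ρv·∂_ρ²v + c₂v·∂_ρ³v) for all τ > −log T, ρ ∈ ℝ. -/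
open Real

/-- Partial derivative in the first variable of a curried function. -/
noncomputable def partial1 (u : ℝ → ℝ → ℝ) (t x : ℝ) : ℝ := deriv (fun s => u s x) t

/-- Partial derivative in the second variable of a curried function. -/
noncomputable def partial2 (u : ℝ → ℝ → ℝ) (t x : ℝ) : ℝ := deriv (fun y => u t y) x


noncomputable def D2 (W : ℝ × ℝ → ℝ) : ℝ × ℝ → ℝ := fun p => fderiv ℝ W p (0, 1)

private lemma contDiffOn_D2 {W : ℝ × ℝ → ℝ} {S : Set (ℝ × ℝ)}
    (h : ContDiffOn ℝ (⊤ : ℕ∞) W S) (hS : IsOpen S) : ContDiffOn ℝ (⊤ : ℕ∞) (D2 W) S :=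
  (h.fderiv_of_isOpen hS (by simp)).clm_apply contDiffOn_const

private lemma deriv2_eq_D2 {W : ℝ × ℝ → ℝ} {t x : ℝ} (h : DifferentiableAt ℝ W (t, x)) :
    deriv (fun y => W (t, y)) x = D2 W (t, x) :=
  (h.hasFDerivAt.comp_hasDerivAt x
    ((hasDerivAt_const x t).prodMk (hasDerivAt_id x))).deriv

private lemma deriv1_eq_fderiv {W : ℝ × ℝ → ℝ} {t x : ℝ} (h : DifferentiableAt ℝ W (t, x)) :
    deriv (fun s => W (s, x)) t = fderiv ℝ W (t, x) (1, 0) :=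
  (h.hasFDerivAt.comp_hasDerivAt t
    ((hasDerivAt_id t).prodMk (hasDerivAt_const t x))).deriv

private lemma hasDerivAt_comp2 {W : ℝ × ℝ → ℝ} {f g : ℝ → ℝ} {f' g' y : ℝ}
    (hf : HasDerivAt f f' y) (hg : HasDerivAt g g' y)
    (hW : DifferentiableAt ℝ W (f y, g y)) :
    HasDerivAt (fun s => W (f s, g s))
      (f' * fderiv ℝ W (f y, g y) (1, 0) + g' * fderiv ℝ W (f y, g y) (0, 1)) y := by
  have h := hW.hasFDerivAt.comp_hasDerivAt y (hf.prodMk hg)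
  have h2 : fderiv ℝ W (f y, g y) (f', g')
      = f' * fderiv ℝ W (f y, g y) (1, 0) + g' * fderiv ℝ W (f y, g y) (0, 1) := by
    have hv : (f', g') = f' • ((1:ℝ), (0:ℝ)) + g' • ((0:ℝ), (1:ℝ)) := by
      simp [Prod.ext_iff]
    rw [hv, map_add, map_smul, map_smul, smul_eq_mul, smul_eq_mul]
  exact h2 ▸ h

/-- If `u` is a smooth classical solution of the generalized `b`-equation on `(0,T) × ℝ`,
then the perturbation `v(τ,ρ) = u(T - e^{-τ}, e^{-τ}ρ) + (1/(b+1))(ρ + c₀)` of the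
self-similar solution, written in similarity coordinates, satisfies the perturbation
equation. -/
theorem perturbation_equation_similarity_coordinates
    (T α c₀ Γ b c₁ c₂ : ℝ) (hT : 0 < T) (hb : b ≠ -1)
    (u : ℝ → ℝ → ℝ)
    (hsmooth : ContDiffOn ℝ (⊤ : ℕ∞) (fun p : ℝ × ℝ => u p.1 p.2)
      (Set.Ioo 0 T ×ˢ (Set.univ : Set ℝ)))
    (heq : ∀ t x : ℝ, 0 < t → t < T →
      partial1 u t x - α ^ 2 * partial1 (partial2 (partial2 u)) t x
        + c₀ * partial2 u t x + (b + 1) * u t x * partial2 u t x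
        + Γ * partial2 (partial2 (partial2 u)) t x
      = α ^ 2 * (c₁ * partial2 u t x * partial2 (partial2 u) t x
          + c₂ * u t x * partial2 (partial2 (partial2 u)) t x))
    (v : ℝ → ℝ → ℝ)
    (hv : ∀ τ ρ : ℝ, v τ ρ
      = u (T - Real.exp (-τ)) (Real.exp (-τ) * ρ) + (1 / (b + 1)) * (ρ + c₀)) :
    ∀ τ ρ : ℝ, -Real.log T < τ →
      partial1 v τ ρ - α ^ 2 * Real.exp (2 * τ) * partial1 (partial2 (partial2 v)) τ ρ
        - α ^ 2 * Real.exp (2 * τ) * (2 - c₁ / (b + 1)) * partial2 (partial2 v) τ ρ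
        + Real.exp (2 * τ)
            * (Γ + α ^ 2 * c₀ * c₂ / (b + 1) + α ^ 2 * ((c₂ - b - 1) / (b + 1)) * ρ)
            * partial2 (partial2 (partial2 v)) τ ρ
        - v τ ρ + (b + 1) * v τ ρ * partial2 v τ ρ
      = α ^ 2 * Real.exp (2 * τ)
          * (c₁ * partial2 v τ ρ * partial2 (partial2 v) τ ρ
            + c₂ * v τ ρ * partial2 (partial2 (partial2 v)) τ ρ) := by
  intro τ ρ hτ
  have hb' : b + 1 ≠ 0 := fun h => hb (by linarith)
  set S : Set (ℝ × ℝ) := Set.Ioo 0 T ×ˢ (Set.univ : Set ℝ) with hSdef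
  have hSo : IsOpen S := isOpen_Ioo.prod isOpen_univ
  set U : ℝ × ℝ → ℝ := fun p => u p.1 p.2 with hUdef
  -- smoothness
  have hUc : ContDiffOn ℝ (⊤ : ℕ∞) U S := hsmooth
  have hW1c : ContDiffOn ℝ (⊤ : ℕ∞) (D2 U) S := contDiffOn_D2 hUc hSo
  have hW2c : ContDiffOn ℝ (⊤ : ℕ∞) (D2 (D2 U)) S := contDiffOn_D2 hW1c hSo
  have hdU : ∀ p ∈ S, DifferentiableAt ℝ U p :=
    fun p hp => (hUc.contDiffAt (hSo.mem_nhds hp)).differentiableAt (by simp)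
  have hdW1 : ∀ p ∈ S, DifferentiableAt ℝ (D2 U) p :=
    fun p hp => (hW1c.contDiffAt (hSo.mem_nhds hp)).differentiableAt (by simp)
  have hdW2 : ∀ p ∈ S, DifferentiableAt ℝ (D2 (D2 U)) p :=
    fun p hp => (hW2c.contDiffAt (hSo.mem_nhds hp)).differentiableAt (by simp)
  -- membership
  have hmem : ∀ σ : ℝ, -Real.log T < σ → ∀ y : ℝ,
      (T - Real.exp (-σ), Real.exp (-σ) * y) ∈ S := by
    intro σ hσ y
    have h1 : Real.exp (-σ) < T := by
      rw [← Real.exp_log hT]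
      exact Real.exp_lt_exp.2 (by linarith)
    refine ⟨⟨?_, ?_⟩, trivial⟩
    · show 0 < T - Real.exp (-σ); linarith
    · show T - Real.exp (-σ) < T; linarith [Real.exp_pos (-σ)]
  -- conversion of partials of u
  have hu2 : ∀ t x : ℝ, (t, x) ∈ S → partial2 u t x = D2 U (t, x) :=
    fun t x hp => deriv2_eq_D2 (hdU _ hp)
  have hu22 : ∀ t x : ℝ, (t, x) ∈ S → partial2 (partial2 u) t x = D2 (D2 U) (t, x) := by
    intro t x hp
    have h1 : (fun y => partial2 u t y) = fun y => D2 U (t, y) :=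
      funext fun y => hu2 t y ⟨hp.1, trivial⟩
    have h2 : partial2 (partial2 u) t x = deriv (fun y => D2 U (t, y)) x :=
      congrArg (fun f => deriv f x) h1
    exact h2.trans (deriv2_eq_D2 (hdW1 _ hp))
  have hu222 : ∀ t x : ℝ, (t, x) ∈ S →
      partial2 (partial2 (partial2 u)) t x = D2 (D2 (D2 U)) (t, x) := by
    intro t x hp
    have h1 : (fun y => partial2 (partial2 u) t y) = fun y => D2 (D2 U) (t, y) :=
      funext fun y => hu22 t y ⟨hp.1, trivial⟩
    have h2 : partial2 (partial2 (partial2 u)) t x = deriv (fun y => D2 (D2 U) (t, y)) x :=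
      congrArg (fun f => deriv f x) h1
    exact h2.trans (deriv2_eq_D2 (hdW2 _ hp))
  have hu1 : ∀ t x : ℝ, (t, x) ∈ S → partial1 u t x = fderiv ℝ U (t, x) (1, 0) :=
    fun t x hp => deriv1_eq_fderiv (hdU _ hp)
  have hu122 : ∀ t x : ℝ, (t, x) ∈ S →
      partial1 (partial2 (partial2 u)) t x = fderiv ℝ (D2 (D2 U)) (t, x) (1, 0) := by
    intro t x hp
    have hev : (fun s => partial2 (partial2 u) s x) =ᶠ[nhds t] fun s => D2 (D2 U) (s, x) := by
      filter_upwards [isOpen_Ioo.eventually_mem hp.1] with s hs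
      exact hu22 s x ⟨hs, trivial⟩
    have h2 : partial1 (partial2 (partial2 u)) t x = deriv (fun s => D2 (D2 U) (s, x)) t :=
      hev.deriv_eq
    exact h2.trans (deriv1_eq_fderiv (hdW2 _ hp))
  -- derivatives of the coordinate maps in τ
  have hexp : ∀ σ : ℝ, HasDerivAt (fun s : ℝ => Real.exp (-s)) (Real.exp (-σ) * -1) σ :=
    fun σ => (Real.hasDerivAt_exp (-σ)).comp σ (hasDerivAt_neg σ)
  -- partials of v in ρ
  have hP2 : ∀ σ : ℝ, -Real.log T < σ → ∀ y : ℝ,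
      partial2 v σ y
        = Real.exp (-σ) * D2 U (T - Real.exp (-σ), Real.exp (-σ) * y) + 1 / (b + 1) := by
    intro σ hσ y
    have hvfun : (fun y' => v σ y')
        = fun y' => U (T - Real.exp (-σ), Real.exp (-σ) * y') + (1 / (b + 1)) * (y' + c₀) :=
      funext fun y' => hv σ y'
    have h1 : partial2 v σ y
        = deriv (fun y' => U (T - Real.exp (-σ), Real.exp (-σ) * y')
            + (1 / (b + 1)) * (y' + c₀)) y :=
      congrArg (fun f => deriv f y) hvfun
    have hd := (hasDerivAt_comp2
        (hasDerivAt_const y (T - Real.exp (-σ)))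
        ((hasDerivAt_id y).const_mul (Real.exp (-σ))) (hdU _ (hmem σ hσ y))).add
      (((hasDerivAt_id y).add_const c₀).const_mul (1 / (b + 1)))
    exact h1.trans (hd.deriv.trans (by simp only [D2, id_eq]; ring))
  have hP22 : ∀ σ : ℝ, -Real.log T < σ → ∀ y : ℝ,
      partial2 (partial2 v) σ y
        = Real.exp (-σ) ^ 2 * D2 (D2 U) (T - Real.exp (-σ), Real.exp (-σ) * y) := by
    intro σ hσ y
    have hvfun : (fun y' => partial2 v σ y')
        = fun y' => Real.exp (-σ) * D2 U (T - Real.exp (-σ), Real.exp (-σ) * y')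
            + 1 / (b + 1) :=
      funext fun y' => hP2 σ hσ y'
    have h1 : partial2 (partial2 v) σ y
        = deriv (fun y' => Real.exp (-σ) * D2 U (T - Real.exp (-σ), Real.exp (-σ) * y')
            + 1 / (b + 1)) y :=
      congrArg (fun f => deriv f y) hvfun
    have hd := ((hasDerivAt_comp2
        (hasDerivAt_const y (T - Real.exp (-σ)))
        ((hasDerivAt_id y).const_mul (Real.exp (-σ))) (hdW1 _ (hmem σ hσ y))).const_mul
          (Real.exp (-σ))).add_const (1 / (b + 1))
    exact h1.trans (hd.deriv.trans (by simp only [D2, id_eq]; ring))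
  have hP222 : partial2 (partial2 (partial2 v)) τ ρ
      = Real.exp (-τ) ^ 3 * D2 (D2 (D2 U)) (T - Real.exp (-τ), Real.exp (-τ) * ρ) := by
    have hvfun : (fun y' => partial2 (partial2 v) τ y')
        = fun y' => Real.exp (-τ) ^ 2
            * D2 (D2 U) (T - Real.exp (-τ), Real.exp (-τ) * y') :=
      funext fun y' => hP22 τ hτ y'
    have h1 : partial2 (partial2 (partial2 v)) τ ρ
        = deriv (fun y' => Real.exp (-τ) ^ 2
            * D2 (D2 U) (T - Real.exp (-τ), Real.exp (-τ) * y')) ρ :=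
      congrArg (fun f => deriv f ρ) hvfun
    have hd := (hasDerivAt_comp2
        (hasDerivAt_const ρ (T - Real.exp (-τ)))
        ((hasDerivAt_id ρ).const_mul (Real.exp (-τ))) (hdW2 _ (hmem τ hτ ρ))).const_mul (Real.exp (-τ) ^ 2)
    exact h1.trans (hd.deriv.trans (by simp only [D2, id_eq]; ring))
  -- partials of v in τ
  have hP1 : partial1 v τ ρ
      = Real.exp (-τ) * fderiv ℝ U (T - Real.exp (-τ), Real.exp (-τ) * ρ) (1, 0)
        - Real.exp (-τ) * ρ * D2 U (T - Real.exp (-τ), Real.exp (-τ) * ρ) := by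
    have hvfun : (fun s => v s ρ)
        = fun s => U (T - Real.exp (-s), Real.exp (-s) * ρ) + (1 / (b + 1)) * (ρ + c₀) :=
      funext fun s => hv s ρ
    have h1 : partial1 v τ ρ
        = deriv (fun s => U (T - Real.exp (-s), Real.exp (-s) * ρ)
            + (1 / (b + 1)) * (ρ + c₀)) τ :=
      congrArg (fun f => deriv f τ) hvfun
    have hd := (hasDerivAt_comp2
        ((hexp τ).const_sub T) ((hexp τ).mul_const ρ) (hdU _ (hmem τ hτ ρ))).add_const ((1 / (b + 1)) * (ρ + c₀))
    exact h1.trans (hd.deriv.trans (by simp only [D2, id_eq]; ring))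
  have hP122 : partial1 (partial2 (partial2 v)) τ ρ
      = -2 * Real.exp (-τ) ^ 2 * D2 (D2 U) (T - Real.exp (-τ), Real.exp (-τ) * ρ)
        + Real.exp (-τ) ^ 2
          * (Real.exp (-τ)
              * fderiv ℝ (D2 (D2 U)) (T - Real.exp (-τ), Real.exp (-τ) * ρ) (1, 0)
            - Real.exp (-τ) * ρ
              * D2 (D2 (D2 U)) (T - Real.exp (-τ), Real.exp (-τ) * ρ)) := by
    have hev : (fun s => partial2 (partial2 v) s ρ)
        =ᶠ[nhds τ] fun s => Real.exp (-s) ^ 2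
            * D2 (D2 U) (T - Real.exp (-s), Real.exp (-s) * ρ) := by
      filter_upwards [isOpen_Ioi.eventually_mem hτ] with s hs
      exact hP22 s hs ρ
    have h1 : partial1 (partial2 (partial2 v)) τ ρ
        = deriv (fun s => Real.exp (-s) ^ 2
            * D2 (D2 U) (T - Real.exp (-s), Real.exp (-s) * ρ)) τ :=
      hev.deriv_eq
    have hd := ((hexp τ).pow 2).mul
      (hasDerivAt_comp2
        ((hexp τ).const_sub T) ((hexp τ).mul_const ρ) (hdW2 _ (hmem τ hτ ρ)))
    exact h1.trans (hd.deriv.trans (by simp only [D2, id_eq, Pi.pow_apply]; push_cast; ring))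
  -- the original equation at the similarity point
  have hpt : (T - Real.exp (-τ), Real.exp (-τ) * ρ) ∈ S := hmem τ hτ ρ
  have heqP := heq (T - Real.exp (-τ)) (Real.exp (-τ) * ρ) hpt.1.1 hpt.1.2
  rw [hu1 _ _ hpt, hu2 _ _ hpt, hu22 _ _ hpt, hu222 _ _ hpt, hu122 _ _ hpt] at heqP
  have hEE : Real.exp (2 * τ) * Real.exp (-τ) ^ 2 = 1 := by
    rw [sq, ← Real.exp_add, ← Real.exp_add, show 2 * τ + (-τ + -τ) = 0 by ring]
    exact Real.exp_zero
  have hq : (b + 1) * (b + 1)⁻¹ = 1 := mul_inv_cancel₀ hb'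
  rw [hP1, hP122, hP22 τ hτ ρ, hP222, hP2 τ hτ ρ, hv τ ρ]
  linear_combination (Real.exp (-τ)) * heqP
    + (Real.exp (-τ) * (Γ * D2 (D2 (D2 U)) (T - Real.exp (-τ), Real.exp (-τ) * ρ)
        - α ^ 2 * fderiv ℝ (D2 (D2 U)) (T - Real.exp (-τ), Real.exp (-τ) * ρ) (1, 0)
        - α ^ 2 * c₁ * D2 U (T - Real.exp (-τ), Real.exp (-τ) * ρ)
            * D2 (D2 U) (T - Real.exp (-τ), Real.exp (-τ) * ρ)
        - α ^ 2 * c₂ * u (T - Real.exp (-τ)) (Real.exp (-τ) * ρ)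
            * D2 (D2 (D2 U)) (T - Real.exp (-τ), Real.exp (-τ) * ρ))) * hEE
    + (u (T - Real.exp (-τ)) (Real.exp (-τ) * ρ)
        + Real.exp (-τ) * D2 U (T - Real.exp (-τ), Real.exp (-τ) * ρ) * (ρ + c₀)
        + (ρ + c₀) * (b + 1)⁻¹
        - α ^ 2 * ρ * Real.exp (2 * τ) * Real.exp (-τ) ^ 3
            * D2 (D2 (D2 U)) (T - Real.exp (-τ), Real.exp (-τ) * ρ)) * hq
end

section
/- Let α, c₀, Γ, b, c₁, c₂ be real numbers with b ≠ −1 and α ≠ 0, let τ₀ ∈ ℝ, and let v̄ : (τ₀,∞) × ℝ → ℝ be a smooth function satisfying ∂_τv̄ − α²∂_τ∂_{ρ₀}²v̄ − α²(1 − c₁/(b+1))∂_{ρ₀}²v̄ + (e^{−τ}(Γ + α²c₀c₂/(b+1)) + α²(c₂/(b+1))ρ₀)∂_{ρ₀}³v̄ + ((b+1)v̄ − ρ₀)∂_{ρ₀}v̄ = α²(c₁∂_{ρ₀}v̄·∂_{ρ₀}²v̄ + c₂v̄·∂_{ρ₀}³v̄) for all τ > τ₀, ρ₀ ∈ ℝ.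 Define w(τ,ρ₀) = v̄(τ,ρ₀) − α²∂_{ρ₀}²v̄(τ,ρ₀). Then w satisfies the non-local (first-order in ρ₀) equation: for all τ > τ₀ and ρ₀ ∈ ℝ, ∂_τw + (1 − c₁/(b+1))w − (e^{−τ}(Γ/α² + c₀c₂/(b+1)) + (c₂/(b+1))ρ₀)∂_{ρ₀}w − (1 − c₁/(b+1))v̄ + (e^{−τ}(Γ/α² + c₀c₂/(b+1)) + ((c₂−b−1)/(b+1))ρ₀)∂_{ρ₀}v̄ = −c₂·∂_{ρ₀}w·v̄ + ((c₁+c₂−b−1)v̄ − c₁w)·∂_{ρ₀}v̄. -/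
open Real

private lemma hasDerivAt_snd_slice {f : ℝ × ℝ → ℝ} {t x : ℝ}
    (hf : DifferentiableAt ℝ f (t, x)) :
    HasDerivAt (fun y => f (t, y)) (fderiv ℝ f (t, x) (0, 1)) x := by
  have h : HasDerivAt (fun y : ℝ => ((t, y) : ℝ × ℝ)) (0, 1) x :=
    (hasDerivAt_const x t).prodMk (hasDerivAt_id x)
  exact hf.hasFDerivAt.comp_hasDerivAt x h

private lemma hasDerivAt_fst_slice {f : ℝ × ℝ → ℝ} {t x : ℝ}
    (hf : DifferentiableAt ℝ f (t, x)) :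
    HasDerivAt (fun s => f (s, x)) (fderiv ℝ f (t, x) (1, 0)) t := by
  have h : HasDerivAt (fun s : ℝ => ((s, x) : ℝ × ℝ)) (1, 0) t :=
    (hasDerivAt_id t).prodMk (hasDerivAt_const t x)
  exact hf.hasFDerivAt.comp_hasDerivAt t h

private lemma contDiffAt_fderiv_apply {f : ℝ × ℝ → ℝ} {p : ℝ × ℝ} (v : ℝ × ℝ)
    (hf : ContDiffAt ℝ (⊤ : ℕ∞) f p) :
    ContDiffAt ℝ (⊤ : ℕ∞) (fun q => fderiv ℝ f q v) p :=
  (hf.fderiv_right (by simp)).clm_apply contDiffAt_const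

/-- Non-local reformulation: if `v̄` satisfies the rescaled perturbation equation, then
`w = v̄ - α² ∂²_{ρ₀} v̄` satisfies the non-local first-order equation. -/
theorem nonlocal_equation_for_w
    (α c₀ Γ b c₁ c₂ τ₀ : ℝ) (hb : b ≠ -1) (hα : α ≠ 0)
    (vbar : ℝ → ℝ → ℝ)
    (hsmooth : ContDiffOn ℝ (⊤ : ℕ∞) (fun p : ℝ × ℝ => vbar p.1 p.2)
      (Set.Ioi τ₀ ×ˢ (Set.univ : Set ℝ)))
    (heq : ∀ τ ρ₀ : ℝ, τ₀ < τ →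
      partial1 vbar τ ρ₀ - α ^ 2 * partial1 (partial2 (partial2 vbar)) τ ρ₀
        - α ^ 2 * (1 - c₁ / (b + 1)) * partial2 (partial2 vbar) τ ρ₀
        + (Real.exp (-τ) * (Γ + α ^ 2 * c₀ * c₂ / (b + 1))
            + α ^ 2 * (c₂ / (b + 1)) * ρ₀)
            * partial2 (partial2 (partial2 vbar)) τ ρ₀
        + ((b + 1) * vbar τ ρ₀ - ρ₀) * partial2 vbar τ ρ₀
      = α ^ 2 * (c₁ * partial2 vbar τ ρ₀ * partial2 (partial2 vbar) τ ρ₀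
          + c₂ * vbar τ ρ₀ * partial2 (partial2 (partial2 vbar)) τ ρ₀))
    (w : ℝ → ℝ → ℝ)
    (hw : ∀ τ ρ₀ : ℝ, w τ ρ₀ = vbar τ ρ₀ - α ^ 2 * partial2 (partial2 vbar) τ ρ₀) :
    ∀ τ ρ₀ : ℝ, τ₀ < τ →
      partial1 w τ ρ₀ + (1 - c₁ / (b + 1)) * w τ ρ₀
        - (Real.exp (-τ) * (Γ / α ^ 2 + c₀ * c₂ / (b + 1)) + (c₂ / (b + 1)) * ρ₀)
            * partial2 w τ ρ₀
        - (1 - c₁ / (b + 1)) * vbar τ ρ₀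
        + (Real.exp (-τ) * (Γ / α ^ 2 + c₀ * c₂ / (b + 1))
            + ((c₂ - b - 1) / (b + 1)) * ρ₀) * partial2 vbar τ ρ₀
      = -c₂ * partial2 w τ ρ₀ * vbar τ ρ₀
        + ((c₁ + c₂ - b - 1) * vbar τ ρ₀ - c₁ * w τ ρ₀) * partial2 vbar τ ρ₀ := by
  intro τ ρ₀ hτ
  set V : ℝ × ℝ → ℝ := fun p => vbar p.1 p.2 with hVdef
  set g1 : ℝ × ℝ → ℝ := fun q => fderiv ℝ V q (0, 1) with hg1def
  set g2 : ℝ × ℝ → ℝ := fun q => fderiv ℝ g1 q (0, 1) with hg2def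
  set g3 : ℝ × ℝ → ℝ := fun q => fderiv ℝ g2 q (0, 1) with hg3def
  have hopen : IsOpen (Set.Ioi τ₀ ×ˢ (Set.univ : Set ℝ)) := isOpen_Ioi.prod isOpen_univ
  have hCD : ∀ t x : ℝ, τ₀ < t → ContDiffAt ℝ (⊤ : ℕ∞) V (t, x) := fun t x ht =>
    hsmooth.contDiffAt (hopen.mem_nhds ⟨ht, trivial⟩)
  have hCD1 : ∀ t x : ℝ, τ₀ < t → ContDiffAt ℝ (⊤ : ℕ∞) g1 (t, x) := fun t x ht =>
    contDiffAt_fderiv_apply (0, 1) (hCD t x ht)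
  have hCD2 : ∀ t x : ℝ, τ₀ < t → ContDiffAt ℝ (⊤ : ℕ∞) g2 (t, x) := fun t x ht =>
    contDiffAt_fderiv_apply (0, 1) (hCD1 t x ht)
  -- partial2 vbar = g1 on the region
  have p2_eq : ∀ t x : ℝ, τ₀ < t → partial2 vbar t x = g1 (t, x) := by
    intro t x ht
    have : HasDerivAt (fun y => V (t, y)) (g1 (t, x)) x :=
      hasDerivAt_snd_slice ((hCD t x ht).differentiableAt (by simp))
    exact this.deriv
  have p22_eq : ∀ t x : ℝ, τ₀ < t → partial2 (partial2 vbar) t x = g2 (t, x) := by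
    intro t x ht
    have hfun : (fun y => partial2 vbar t y) = fun y => g1 (t, y) :=
      funext fun y => p2_eq t y ht
    have : HasDerivAt (fun y => g1 (t, y)) (g2 (t, x)) x :=
      hasDerivAt_snd_slice ((hCD1 t x ht).differentiableAt (by simp))
    rw [partial2, hfun]
    exact this.deriv
  have p222_eq : ∀ t x : ℝ, τ₀ < t → partial2 (partial2 (partial2 vbar)) t x = g3 (t, x) := by
    intro t x ht
    have hfun : (fun y => partial2 (partial2 vbar) t y) = fun y => g2 (t, y) :=
      funext fun y => p22_eq t y ht
    have : HasDerivAt (fun y => g2 (t, y)) (g3 (t, x)) x :=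
      hasDerivAt_snd_slice ((hCD2 t x ht).differentiableAt (by simp))
    rw [partial2, hfun]
    exact this.deriv
  -- first-variable derivatives
  have hnhds : Set.Ioi τ₀ ∈ nhds τ := isOpen_Ioi.mem_nhds hτ
  have p1v_eq : partial1 vbar τ ρ₀ = fderiv ℝ V (τ, ρ₀) (1, 0) := by
    have : HasDerivAt (fun s => V (s, ρ₀)) (fderiv ℝ V (τ, ρ₀) (1, 0)) τ :=
      hasDerivAt_fst_slice ((hCD τ ρ₀ hτ).differentiableAt (by simp))
    exact this.deriv
  have p1g2_eq : partial1 (partial2 (partial2 vbar)) τ ρ₀ = fderiv ℝ g2 (τ, ρ₀) (1, 0) := by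
    have hev : (fun s => partial2 (partial2 vbar) s ρ₀) =ᶠ[nhds τ] fun s => g2 (s, ρ₀) :=
      Filter.eventually_of_mem hnhds fun s hs => p22_eq s ρ₀ hs
    have hder : HasDerivAt (fun s => g2 (s, ρ₀)) (fderiv ℝ g2 (τ, ρ₀) (1, 0)) τ :=
      hasDerivAt_fst_slice ((hCD2 τ ρ₀ hτ).differentiableAt (by simp))
    rw [partial1, hev.deriv_eq]
    exact hder.deriv
  -- derivatives of w
  have p1w_eq : partial1 w τ ρ₀
      = fderiv ℝ V (τ, ρ₀) (1, 0) - α ^ 2 * fderiv ℝ g2 (τ, ρ₀) (1, 0) := by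
    have hev : (fun s => w s ρ₀) =ᶠ[nhds τ]
        fun s => V (s, ρ₀) - α ^ 2 * g2 (s, ρ₀) := by
      refine Filter.eventually_of_mem hnhds fun s hs => ?_
      show w s ρ₀ = V (s, ρ₀) - α ^ 2 * g2 (s, ρ₀)
      rw [hw s ρ₀, p22_eq s ρ₀ hs]
    have hder : HasDerivAt (fun s => V (s, ρ₀) - α ^ 2 * g2 (s, ρ₀))
        (fderiv ℝ V (τ, ρ₀) (1, 0) - α ^ 2 * fderiv ℝ g2 (τ, ρ₀) (1, 0)) τ :=
      (hasDerivAt_fst_slice ((hCD τ ρ₀ hτ).differentiableAt (by simp))).sub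
        ((hasDerivAt_fst_slice ((hCD2 τ ρ₀ hτ).differentiableAt (by simp))).const_mul (α ^ 2))
    rw [partial1, hev.deriv_eq]
    exact hder.deriv
  have p2w_eq : partial2 w τ ρ₀ = g1 (τ, ρ₀) - α ^ 2 * g3 (τ, ρ₀) := by
    have hfun : (fun y => w τ y) = fun y => V (τ, y) - α ^ 2 * g2 (τ, y) := by
      funext y; rw [hw τ y, p22_eq τ y hτ]
    have hder : HasDerivAt (fun y => V (τ, y) - α ^ 2 * g2 (τ, y))
        (g1 (τ, ρ₀) - α ^ 2 * g3 (τ, ρ₀)) ρ₀ :=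
      (hasDerivAt_snd_slice ((hCD τ ρ₀ hτ).differentiableAt (by simp))).sub
        ((hasDerivAt_snd_slice ((hCD2 τ ρ₀ hτ).differentiableAt (by simp))).const_mul (α ^ 2))
    rw [partial2, hfun]
    exact hder.deriv
  -- assemble
  have heq' := heq τ ρ₀ hτ
  rw [p1v_eq, p1g2_eq, p2_eq τ ρ₀ hτ, p22_eq τ ρ₀ hτ, p222_eq τ ρ₀ hτ] at heq'
  have hvτ : vbar τ ρ₀ = V (τ, ρ₀) := rfl
  rw [p1w_eq, p2w_eq, p2_eq τ ρ₀ hτ, hw τ ρ₀, p22_eq τ ρ₀ hτ, hvτ]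
  have hb1 : b + 1 ≠ 0 := fun h => hb (by linarith)
  have hα2 : (α : ℝ) ^ 2 ≠ 0 := pow_ne_zero 2 hα
  have hA : α ^ 2 * (α ^ 2)⁻¹ = 1 := mul_inv_cancel₀ hα2
  have hB : (b + 1) * (b + 1)⁻¹ = 1 := mul_inv_cancel₀ hb1
  linear_combination heq' + (Real.exp (-τ) * Γ * g3 (τ, ρ₀)) * hA
    - (ρ₀ * g1 (τ, ρ₀)) * hB
end

section
/- Let α > 0 and define p : ℝ → ℝ by p(x) = (1/(2α))·e^{−|x|/α}. Let f : ℝ → ℝ be continuous with compact support, and define v : ℝ → ℝ by the convolution v(x) = ∫_ℝ p(x−y) f(y) dy. Then v is twice differentiable on ℝ and v(x) − α² v''(x) = f(x) for every x ∈ ℝ; equivalently, v'' = α^{−2}(v − f), i.e. (p ⋆ f)'' = α^{−2}(p ⋆ f − f). In other words, p is a fundamental solution of the operator 1 − α²∂ₓ². -/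
/-!
Splitting the integral at `y = x` removes the absolute value:
`∫ e^{-c|x-y|} f(y) dy = e^{-cx} ∫_{y ≤ x} e^{cy} f(y) dy + e^{cx} ∫_{y > x} e^{-cy} f(y) dy`.
Differentiating the right-hand side by the fundamental theorem of calculus, the boundary
terms `± f(x)` cancel at the first derivative and add up to `2 f(x)` at the second, which
gives `w'' = c² w - 2c f` for `w = e^{-c|·|} ⋆ f`; take `c = 1/α` and `v = w / (2α)`.
-/

open MeasureTheory Set Real

section IntegralDeriv

variable {E : Type*} [NormedAddCommGroup E] [NormedSpace ℝ E] [CompleteSpace E]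
  {g : ℝ → E}

theorem hasDerivAt_integral_Iic (hg : Continuous g) (hgi : Integrable g) (x : ℝ) :
    HasDerivAt (fun x => ∫ y in Iic x, g y) (g x) x := by
  have hsplit :
      (fun x => ∫ y in Iic x, g y) = fun x => (∫ y in Iic 0, g y) + ∫ y in 0..x, g y := by
    funext z
    rw [← intervalIntegral.integral_Iic_sub_Iic hgi.integrableOn hgi.integrableOn, add_sub_cancel]
  rw [hsplit]
  exact (intervalIntegral.integral_hasDerivAt_right hgi.intervalIntegrable
    hg.aestronglyMeasurable.stronglyMeasurableAtFilter hg.continuousAt).const_add _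

theorem hasDerivAt_integral_Ioi (hg : Continuous g) (hgi : Integrable g) (x : ℝ) :
    HasDerivAt (fun x => ∫ y in Ioi x, g y) (-g x) x := by
  have hsplit : (fun x => ∫ y in Ioi x, g y) = fun x => (∫ y, g y) - ∫ y in Iic x, g y := by
    funext z
    rw [← intervalIntegral.integral_Iic_add_Ioi hgi.integrableOn hgi.integrableOn,
      add_sub_cancel_left]
  rw [hsplit]
  exact (hasDerivAt_integral_Iic hg hgi x).const_sub _

end IntegralDeriv

/-- For `s = 1` this is the convolution `e^{-c|·|} ⋆ f`; for `s = -1` it is its derivative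
divided by `-c`. -/
noncomputable def expSplitConv (c : ℝ) (f : ℝ → ℝ) (s x : ℝ) : ℝ :=
  exp (-c * x) * (∫ y in Iic x, exp (c * y) * f y) +
    s * exp (c * x) * ∫ y in Ioi x, exp (-c * y) * f y

section ExpSplitConv

variable (c : ℝ) {f : ℝ → ℝ}

theorem integral_exp_neg_mul_abs_sub_mul_eq_expSplitConv (hf : Continuous f)
    (hfs : HasCompactSupport f) (x : ℝ) :
    ∫ y, exp (-c * |x - y|) * f y = expSplitConv c f 1 x := by
  have hint : Integrable fun y => exp (-c * |x - y|) * f y :=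
    ((continuous_const.mul (continuous_const.sub continuous_id).abs).rexp.mul hf
      ).integrable_of_hasCompactSupport hfs.mul_left
  have hleft : ∫ y in Iic x, exp (-c * |x - y|) * f y =
      exp (-c * x) * ∫ y in Iic x, exp (c * y) * f y := by
    rw [← integral_const_mul]
    refine setIntegral_congr_fun measurableSet_Iic fun y hy => ?_
    rw [abs_of_nonneg (sub_nonneg.2 hy), ← mul_assoc, ← exp_add]
    ring_nf
  have hright : ∫ y in Ioi x, exp (-c * |x - y|) * f y =
      exp (c * x) * ∫ y in Ioi x, exp (-c * y) * f y := by
    rw [← integral_const_mul]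
    refine setIntegral_congr_fun measurableSet_Ioi fun y hy => ?_
    rw [abs_of_neg (sub_neg.2 hy), ← mul_assoc, ← exp_add]
    ring_nf
  rw [← intervalIntegral.integral_Iic_add_Ioi hint.integrableOn hint.integrableOn, hleft, hright,
    expSplitConv, one_mul]

theorem hasDerivAt_expSplitConv (hf : Continuous f) (hfs : HasCompactSupport f) (s x : ℝ) :
    HasDerivAt (expSplitConv c f s)
      (-c * expSplitConv c f (-s) x + (1 - s) * f x) x := by
  have hexp : ∀ a : ℝ, HasDerivAt (fun x => exp (a * x)) (a * exp (a * x)) x := fun a => by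
    simpa [mul_comm] using ((hasDerivAt_id x).const_mul a).exp
  have hcont : ∀ a : ℝ, Continuous fun y => exp (a * y) * f y := fun a =>
    (continuous_const.mul continuous_id).rexp.mul hf
  have hint : ∀ a : ℝ, Integrable fun y => exp (a * y) * f y := fun a =>
    (hcont a).integrable_of_hasCompactSupport hfs.mul_left
  have h := ((hexp (-c)).mul (hasDerivAt_integral_Iic (hcont c) (hint c) x)).add
    (((hexp c).const_mul s).mul (hasDerivAt_integral_Ioi (hcont (-c)) (hint (-c)) x))
  -- the boundary terms carry the factor `e^{-cx} e^{cx} = 1`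
  have hcancel : exp (-c * x) * exp (c * x) = 1 := by rw [← exp_add]; simp
  refine h.congr_deriv ?_
  simp only [expSplitConv]
  linear_combination (1 - s) * f x * hcancel

end ExpSplitConv

/-- `p(x) = (1/(2α)) e^{-|x|/α}` is a fundamental solution of `1 - α²∂ₓ²`: for continuous
compactly supported `f`, the convolution `v = p ⋆ f` is twice differentiable and satisfies
`v - α² v'' = f`, i.e. `v'' = α⁻²(v - f)`. -/
theorem fundamental_solution_one_sub_alpha_sq_laplacian
    (α : ℝ) (hα : 0 < α)
    (p : ℝ → ℝ) (hp : ∀ x : ℝ, p x = (1 / (2 * α)) * Real.exp (-|x| / α))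
    (f : ℝ → ℝ) (hf : Continuous f) (hsupp : HasCompactSupport f)
    (v : ℝ → ℝ) (hv : ∀ x : ℝ, v x = ∫ y : ℝ, p (x - y) * f y) :
    (∀ x : ℝ, DifferentiableAt ℝ v x) ∧
    (∀ x : ℝ, DifferentiableAt ℝ (deriv v) x) ∧
    (∀ x : ℝ, v x - α ^ 2 * deriv (deriv v) x = f x) ∧
    (∀ x : ℝ, deriv (deriv v) x = α⁻¹ ^ 2 * (v x - f x)) := by
  have hvw : v = fun x => (2 * α)⁻¹ * expSplitConv α⁻¹ f 1 x := by
    funext x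
    rw [hv, ← integral_exp_neg_mul_abs_sub_mul_eq_expSplitConv _ hf hsupp, ← integral_const_mul]
    congr 1
    funext y
    rw [hp]
    ring_nf
  have hv' : ∀ x, HasDerivAt v ((2 * α)⁻¹ * (-α⁻¹ * expSplitConv α⁻¹ f (-1) x)) x := by
    intro x
    rw [hvw]
    simpa using (hasDerivAt_expSplitConv α⁻¹ hf hsupp 1 x).const_mul (2 * α)⁻¹
  have hv'' : ∀ x, HasDerivAt (deriv v) (α⁻¹ ^ 2 * (v x - f x)) x := fun x => by
    rw [show deriv v = _ from funext fun x => (hv' x).deriv, hvw]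
    refine (((hasDerivAt_expSplitConv α⁻¹ hf hsupp (-1) x).const_mul (-α⁻¹)).const_mul
      (2 * α)⁻¹).congr_deriv ?_
    rw [neg_neg]
    field_simp
    ring
  refine ⟨fun x => (hv' x).differentiableAt, fun x => (hv'' x).differentiableAt, fun x => ?_,
    fun x => (hv'' x).deriv⟩
  rw [(hv'' x).deriv]
  field_simp
  ring
end

section
/- Let a > 0 and C ≥ 0, and let y : [0,∞) → ℝ be differentiable with y(τ) > 0 for all τ ≥ 0, satisfying the Bernoulli-type differential inequality y'(τ) + a·y(τ) ≤ C·y(τ)^{3/2} for all τ ≥ 0. If the initial value is small enough that C·√(y(0)) < a, then for all τ ≥ 0, y(τ) ≤ (1 − C·√(y(0))/a)^{−2} · y(0) · e^{−aτ}. (Equivalently, setting z = y^{−1/2}, the inequality −z' + (a/2)z ≤ C/2 together with z(0) > C/a yields the exponential decay y(τ) ≲ e^{−aτ}y(0).) -/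
/-!
The substitution `z = y^{-1/2}` linearizes the Bernoulli inequality: it becomes
`z' ≥ (a/2) (z - C/a)`, so by Grönwall `z τ - C/a ≥ (z 0 - C/a) e^{aτ/2}`. The smallness
assumption says exactly that `z 0 - C/a > 0`; dropping `C/a ≥ 0` and inverting back gives the decay.
-/

open Real

theorem mul_exp_le_of_mul_le_deriv {f f' : ℝ → ℝ} {k t₀ : ℝ}
    (hf : ∀ t, t₀ ≤ t → HasDerivAt f (f' t) t) (hbound : ∀ t, t₀ ≤ t → k * f t ≤ f' t) :
    ∀ t, t₀ ≤ t → f t₀ * exp (k * (t - t₀)) ≤ f t := by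
  intro t ht
  have hneg := le_gronwallBound_of_liminf_deriv_right_le (f := -f) (f' := -f') (δ := -f t₀)
    (K := k) (ε := 0) (b := t)
    (fun s hs => (hf s hs.1).continuousAt.continuousWithinAt.neg)
    (fun s hs _ hr => ((hf s hs.1).neg.hasDerivWithinAt).liminf_right_slope_le hr)
    le_rfl (fun s hs => by simpa using hbound s hs.1) t ⟨ht, le_rfl⟩
  rw [gronwallBound_ε0] at hneg
  simp only [Pi.neg_apply] at hneg
  linarith

theorem HasDerivAt.inv_sqrt {y : ℝ → ℝ} {y' t : ℝ} (hy : HasDerivAt y y' t) (hpos : 0 < y t) :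
    HasDerivAt (fun s => (√(y s))⁻¹) (-y' / (2 * y t * √(y t))) t := by
  have hs : 0 < √(y t) := sqrt_pos.mpr hpos
  refine ((hy.sqrt hpos.ne').inv hs.ne').congr_deriv ?_
  rw [sq_sqrt hpos.le]
  field_simp

theorem mul_inv_sqrt_sub_le_of_bernoulli {a C y y' : ℝ} (ha : a ≠ 0) (hy : 0 < y)
    (h : y' + a * y ≤ C * (y * √y)) :
    a / 2 * ((√y)⁻¹ - C / a) ≤ -y' / (2 * y * √y) := by
  have hs : 0 < √y := sqrt_pos.mpr hy
  rw [le_div_iff₀ (by positivity)]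
  have : a / 2 * ((√y)⁻¹ - C / a) * (2 * y * √y) = a * y - C * (y * √y) := by
    field_simp
  linarith

theorem le_inv_sq_of_le_inv_sqrt {x b : ℝ} (hb : 0 < b) (h : b ≤ (√x)⁻¹) : x ≤ b⁻¹ ^ 2 := by
  have hs : 0 < √x := inv_pos.mp (hb.trans_le h)
  exact (sqrt_le_left (inv_nonneg.mpr hb.le)).mp ((le_inv_comm₀ hb hs).mp h)

/-- Bernoulli-type differential inequality: if `y > 0` satisfies
`y' + a y ≤ C y^{3/2}` on `[0,∞)` with `C √(y 0) < a`, then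
`y τ ≤ (1 - C √(y 0)/a)⁻² y 0 e^{-aτ}` for all `τ ≥ 0`. -/
theorem bernoulli_differential_inequality_decay
    (a C : ℝ) (ha : 0 < a) (hC : 0 ≤ C)
    (y y' : ℝ → ℝ)
    (hderiv : ∀ τ : ℝ, 0 ≤ τ → HasDerivAt y (y' τ) τ)
    (hpos : ∀ τ : ℝ, 0 ≤ τ → 0 < y τ)
    (hineq : ∀ τ : ℝ, 0 ≤ τ → y' τ + a * y τ ≤ C * (y τ * Real.sqrt (y τ)))
    (hsmall : C * Real.sqrt (y 0) < a) :
    ∀ τ : ℝ, 0 ≤ τ →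
      y τ ≤ ((1 - C * Real.sqrt (y 0) / a)⁻¹) ^ 2 * y 0 * Real.exp (-a * τ) := by
  intro τ hτ
  have hgrowth := mul_exp_le_of_mul_le_deriv (f := fun t => (√(y t))⁻¹ - C / a) (k := a / 2)
    (fun t ht => ((hderiv t ht).inv_sqrt (hpos t ht)).sub_const (C / a))
    (fun t ht => mul_inv_sqrt_sub_le_of_bernoulli ha.ne' (hpos t ht) (hineq t ht)) τ hτ
  have hs0 : 0 < √(y 0) := sqrt_pos.mpr (hpos 0 le_rfl)
  have hmargin : 0 < 1 - C * √(y 0) / a := by rwa [sub_pos, div_lt_one ha]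
  have hK : (√(y 0))⁻¹ - C / a = (1 - C * √(y 0) / a) / √(y 0) := by field_simp
  rw [hK, sub_zero] at hgrowth
  calc y τ ≤ ((1 - C * √(y 0) / a) / √(y 0) * exp (a / 2 * τ))⁻¹ ^ 2 :=
        le_inv_sq_of_le_inv_sqrt (by positivity) (by linarith [div_nonneg hC ha.le])
    _ = _ := by
        rw [mul_inv, inv_div, mul_pow, div_pow, sq_sqrt (hpos 0 le_rfl).le, inv_pow,
          ← exp_nat_mul, ← exp_neg, show -((2 : ℕ) * (a / 2 * τ)) = -a * τ by push_cast; ring,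
          div_eq_mul_inv, ← inv_pow]
        ring
end
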